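/- arXiv:2103.11344 — 3 statements merged into one kernel-verified Lean document; each statement's English description precedes it below -/
import Mathlib

section
/- Let Y be a proper metric space and let G be a topological group acting continuously by isometries on Y, such that the action is proper (for every compact K ⊆ Y the set {g ∈ G : g·K ∩ K ≠ ∅} is compact) and the identity component G_0 of G is open in G (as holds when G is a Lie group). Then for every q ∈ Y there exists δ > 0 such that for all r ∈ (0, δ] the subgroup G(r,q) generated by {g ∈ G : d(q, g·q) ≤ r} equals G(δ,q); moreover, G(δ,q) is the subgroup of G generated by G_0 ∪ G_q, where G_q is the isotropy subgroup at q. -/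
/-!
For every `r > 0` the subgroup `G(r,q)` contains the neighbourhood `{g | d(q, g•q) < r}` of `1`,
so it is open, hence clopen, hence contains `G₀`; it obviously contains `G_q`. Conversely
`H = ⟨G₀ ∪ G_q⟩` is open, and properness makes `{g | d(q, g•q) ≤ 1} \ H` compact. The
displacement `g ↦ d(q, g•q)` is positive there (as `G_q ⊆ H`), so it is bounded below by some
`δ > 0`. Thus `{g | d(q, g•q) ≤ δ} ⊆ H`, and `G(r,q) = H` for all `0 < r ≤ δ`.
-/

open scoped Pointwise

theorem Subgroup.connectedComponent_one_subset_of_isOpen {G : Type*} [Group G]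
    [TopologicalSpace G] [SeparatelyContinuousMul G] {H : Subgroup G}
    (hH : IsOpen (H : Set G)) : connectedComponent (1 : G) ⊆ H :=
  IsClopen.connectedComponent_subset ⟨H.isClosed_of_isOpen hH, hH⟩ H.one_mem

theorem MulAction.stabilizer_subset_setOf_dist_smul_le {G Y : Type*} [Group G]
    [PseudoMetricSpace Y] [MulAction G Y] {q : Y} {r : ℝ} (hr : 0 ≤ r) :
    (stabilizer G q : Set G) ⊆ {g | dist q (g • q) ≤ r} := fun g hg => by
  simpa [(mem_stabilizer_iff.1 hg : g • q = q)] using hr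

section Displacement

variable {G Y : Type*} [Group G] [TopologicalSpace G] [MulAction G Y]

theorem continuous_dist_smul [PseudoMetricSpace Y] [ContinuousSMul G Y] (q : Y) :
    Continuous fun g : G => dist q (g • q) :=
  continuous_const.dist (continuous_id.smul continuous_const)

theorem Subgroup.isOpen_closure_setOf_dist_smul_le [SeparatelyContinuousMul G]
    [PseudoMetricSpace Y] [ContinuousSMul G Y] (q : Y) {r : ℝ} (hr : 0 < r) :
    IsOpen (closure {g : G | dist q (g • q) ≤ r} : Set G) := by
  have hball : {g : G | dist q (g • q) < r} ∈ nhds (1 : G) :=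
    (isOpen_lt (continuous_dist_smul q) continuous_const).mem_nhds (by simpa using hr)
  exact Subgroup.isOpen_of_mem_nhds _ <|
    Filter.mem_of_superset hball fun g (hg : dist q (g • q) < r) => subset_closure hg.le

theorem isCompact_setOf_dist_smul_le [PseudoMetricSpace Y] [ProperSpace Y] [ContinuousSMul G Y]
    (hproper : ∀ K : Set Y, IsCompact K → IsCompact {g : G | (g • K ∩ K).Nonempty})
    (q : Y) (R : ℝ) : IsCompact {g : G | dist q (g • q) ≤ R} := by
  refine (hproper _ (isCompact_closedBall q R)).of_isClosed_subset
    (isClosed_le (continuous_dist_smul q) continuous_const) fun g hg => ?_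
  refine ⟨g • q, Set.smul_mem_smul_set (Metric.mem_closedBall_self ?_), ?_⟩
  · exact dist_nonneg.trans hg
  · rwa [Metric.mem_closedBall, dist_comm]

theorem exists_pos_setOf_dist_smul_le_subset [MetricSpace Y] [ContinuousSMul G Y] {q : Y}
    {U : Set G} (hU : IsOpen U) (hstab : (MulAction.stabilizer G q : Set G) ⊆ U)
    {R : ℝ} (hR : 0 < R) (hK : IsCompact {g : G | dist q (g • q) ≤ R}) :
    ∃ δ > 0, {g : G | dist q (g • q) ≤ δ} ⊆ U := by
  have hpos : ∀ g ∈ {g : G | dist q (g • q) ≤ R} \ U, 0 < dist q (g • q) := fun g hg =>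
    dist_pos.2 fun hq => hg.2 (hstab (MulAction.mem_stabilizer_iff.2 hq.symm))
  obtain ⟨a, ha, hbound⟩ :=
    (hK.diff hU).exists_forall_le' (continuous_dist_smul q).continuousOn hpos
  refine ⟨min R (a / 2), by positivity, fun g hg => ?_⟩
  by_contra hgU
  have hgR : dist q (g • q) ≤ R := hg.trans (min_le_left _ _)
  have := (hbound g ⟨hgR, hgU⟩).trans (hg.trans (min_le_right _ _))
  linarith

end Displacement

theorem pointed_gap_lemma_general
    {Y : Type*} [MetricSpace Y] [ProperSpace Y]
    {G : Type*} [Group G] [TopologicalSpace G] [IsTopologicalGroup G]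
    [MulAction G Y] [ContinuousSMul G Y]
    (hproper : ∀ K : Set Y, IsCompact K → IsCompact {g : G | (g • K ∩ K).Nonempty})
    (hopen : IsOpen (connectedComponent (1 : G)))
    (q : Y) :
    ∃ δ > 0,
      (∀ r : ℝ, 0 < r → r ≤ δ →
        Subgroup.closure {g : G | dist q (g • q) ≤ r}
          = Subgroup.closure {g : G | dist q (g • q) ≤ δ}) ∧
      Subgroup.closure {g : G | dist q (g • q) ≤ δ}
        = Subgroup.closure
            (connectedComponent (1 : G) ∪ (MulAction.stabilizer G q : Set G)) := by
  set H := Subgroup.closure (connectedComponent (1 : G) ∪ (MulAction.stabilizer G q : Set G))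
  have hH_le : ∀ r : ℝ, 0 < r → H ≤ Subgroup.closure {g : G | dist q (g • q) ≤ r} :=
    fun r hr => (Subgroup.closure_le _).2 <| Set.union_subset
      (Subgroup.connectedComponent_one_subset_of_isOpen
        (Subgroup.isOpen_closure_setOf_dist_smul_le q hr))
      ((MulAction.stabilizer_subset_setOf_dist_smul_le hr.le).trans Subgroup.subset_closure)
  have hH_open : IsOpen (H : Set G) := Subgroup.isOpen_of_mem_nhds _ <|
    Filter.mem_of_superset (hopen.mem_nhds mem_connectedComponent)
      (Set.subset_union_left.trans Subgroup.subset_closure)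
  obtain ⟨δ, hδ, hδH⟩ := exists_pos_setOf_dist_smul_le_subset hH_open
    (Set.subset_union_right.trans Subgroup.subset_closure) one_pos
    (isCompact_setOf_dist_smul_le hproper q 1)
  have hGδ : Subgroup.closure {g : G | dist q (g • q) ≤ δ} = H :=
    le_antisymm ((Subgroup.closure_le _).2 hδH) (hH_le δ hδ)
  exact ⟨δ, hδ, fun r hr hrδ =>
    le_antisymm (Subgroup.closure_mono fun g hg => le_trans hg hrδ) (hGδ.le.trans (hH_le r hr)),
    hGδ⟩

/-- pointed gap lemma, Lemma 6.2. Let `G` be a topological group acting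
continuously by isometries on a proper metric space `Y`, with proper action and open identity
component `G₀`. Then for every `q ∈ Y` there is `δ > 0` such that for all `r ∈ (0, δ]` the
subgroup `G(r,q)` generated by `{g : d(q, g·q) ≤ r}` equals `G(δ,q)`; moreover `G(δ,q)` is the
subgroup generated by `G₀ ∪ G_q`. -/
theorem pointed_gap_lemma
    {Y : Type*} [MetricSpace Y] [ProperSpace Y]
    {G : Type*} [Group G] [TopologicalSpace G] [IsTopologicalGroup G]
    [MulAction G Y] [IsIsometricSMul G Y] [ContinuousSMul G Y]
    (hproper : ∀ K : Set Y, IsCompact K → IsCompact {g : G | (g • K ∩ K).Nonempty})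
    (hopen : IsOpen (connectedComponent (1 : G)))
    (q : Y) :
    ∃ δ > 0,
      (∀ r : ℝ, 0 < r → r ≤ δ →
        Subgroup.closure {g : G | dist q (g • q) ≤ r}
          = Subgroup.closure {g : G | dist q (g • q) ≤ δ}) ∧
      Subgroup.closure {g : G | dist q (g • q) ≤ δ}
        = Subgroup.closure
            (connectedComponent (1 : G) ∪ (MulAction.stabilizer G q : Set G)) :=
  pointed_gap_lemma_general hproper hopen q
end

section
/- Let Y be a proper metric space and let G be a topological group acting continuously by isometries on Y, such that the action is proper (for every compact K ⊆ Y the set {g ∈ G : g·K ∩ K ≠ ∅} is compact) and the identity component G_0 of G is open in G. Then for every q ∈ Y there exists δ > 0 such that B_δ(q) ∩ (G·q) ⊆ G_0·q; that is, every point of the orbit G·q at distance less than δ from q lies in the G_0-orbit of q. -/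
/-!
The orbit map `g ↦ g • q` is open onto the orbit near `q`, for any open `U ∋ 1`: the elements
`g` moving `q` into the unit ball form a compact set by properness, and outside the open set
`U * Stab(q)` they move `q` into a compact set not containing `q`, hence a definite distance away.
So points `g • q` close enough to `q` have `g ∈ U * Stab(q)`, i.e. `g • q ∈ U • q`.
Taking `U = G₀` gives the theorem.
-/

open scoped Pointwise
open Metric MulAction

theorem exists_pos_forall_dist_smul_lt_mem {G Y : Type*} [TopologicalSpace G] [MetricSpace Y]
    [SMul G Y] [ContinuousSMul G Y] {C V : Set G} (hC : IsCompact C) (hV : IsOpen V) {q : Y}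
    (hfix : ∀ g : G, g • q = q → g ∈ V) :
    ∃ ε > 0, ∀ g ∈ C, dist (g • q) q < ε → g ∈ V := by
  have hT : IsCompact ((· • q) '' (C \ V)) :=
    (hC.diff hV).image (continuous_id.smul continuous_const)
  have hqT : q ∉ (· • q) '' (C \ V) := by
    rintro ⟨g, ⟨-, hgV⟩, hgq⟩
    exact hgV (hfix g hgq)
  obtain ⟨ε, hε, hball⟩ := Metric.mem_nhds_iff.mp (hT.isClosed.isOpen_compl.mem_nhds hqT)
  refine ⟨ε, hε, fun g hgC hg => ?_⟩
  by_contra hgV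
  exact hball hg ⟨g, ⟨hgC, hgV⟩, rfl⟩

theorem smul_mem_image_smul_of_mem_mul_stabilizer {G Y : Type*} [Group G] [MulAction G Y]
    {U : Set G} {q : Y} {g : G} (hg : g ∈ U * stabilizer G q) :
    g • q ∈ (· • q) '' U := by
  obtain ⟨u, hu, s, hs, rfl⟩ := Set.mem_mul.mp hg
  exact ⟨u, hu, by rw [mul_smul, mem_stabilizer_iff.mp hs]⟩

theorem exists_ball_inter_orbit_subset_image_smul {Y G : Type*} [MetricSpace Y] [ProperSpace Y]
    [Group G] [TopologicalSpace G] [ContinuousMul G] [MulAction G Y] [ContinuousSMul G Y]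
    (hproper : ∀ K : Set Y, IsCompact K → IsCompact {g : G | (g • K ∩ K).Nonempty})
    {U : Set G} (hU : IsOpen U) (h1 : 1 ∈ U) (q : Y) :
    ∃ δ > (0 : ℝ), ball q δ ∩ orbit G q ⊆ (· • q) '' U := by
  obtain ⟨ε, hε, hmem⟩ := exists_pos_forall_dist_smul_lt_mem
    (hproper _ (isCompact_closedBall q 1)) (hU.mul_right (t := stabilizer G q))
    (fun g hg => Set.subset_mul_right _ h1 (mem_stabilizer_iff.mpr hg))
  refine ⟨min ε 1, by positivity, ?_⟩
  rintro _ ⟨hp, g, rfl⟩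
  have hd : dist (g • q) q < min ε 1 := mem_ball.mp hp
  have hgS : (g • closedBall q 1 ∩ closedBall q 1).Nonempty :=
    ⟨g • q, Set.smul_mem_smul_set (mem_closedBall_self zero_le_one),
      mem_closedBall.mpr (hd.le.trans (min_le_right _ _))⟩
  exact smul_mem_image_smul_of_mem_mul_stabilizer (hmem g hgS (hd.trans_le (min_le_left _ _)))

theorem orbit_component_open_general
    {Y : Type*} [MetricSpace Y] [ProperSpace Y]
    {G : Type*} [Group G] [TopologicalSpace G] [IsTopologicalGroup G]
    [MulAction G Y] [ContinuousSMul G Y]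
    (hproper : ∀ K : Set Y, IsCompact K → IsCompact {g : G | (g • K ∩ K).Nonempty})
    (hopen : IsOpen (connectedComponent (1 : G)))
    (q : Y) :
    ∃ δ > (0 : ℝ), Metric.ball q δ ∩ MulAction.orbit G q ⊆
      (fun g : G => g • q) '' connectedComponent (1 : G) :=
  exists_ball_inter_orbit_subset_image_smul hproper hopen mem_connectedComponent q

/-- Let `G` be a topological group acting continuously by isometries on a
proper metric space `Y`, with proper action and open identity component `G₀`. Then for every
`q ∈ Y` there is `δ > 0` such that every point of the orbit `G·q` at distance less than `δ`
from `q` lies in the `G₀`-orbit of `q`. -/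
theorem orbit_component_open
    {Y : Type*} [MetricSpace Y] [ProperSpace Y]
    {G : Type*} [Group G] [TopologicalSpace G] [IsTopologicalGroup G]
    [MulAction G Y] [IsIsometricSMul G Y] [ContinuousSMul G Y]
    (hproper : ∀ K : Set Y, IsCompact K → IsCompact {g : G | (g • K ∩ K).Nonempty})
    (hopen : IsOpen (connectedComponent (1 : G)))
    (q : Y) :
    ∃ δ > (0 : ℝ), Metric.ball q δ ∩ MulAction.orbit G q ⊆
      (fun g : G => g • q) '' connectedComponent (1 : G) :=
  orbit_component_open_general hproper hopen q
end

section
/- Let k be a natural number and let H be a subgroup of the isometry group of Euclidean space ℝᵏ such that dist(w, h·w) ≤ 1/20 for every h ∈ H and every w ∈ ℝᵏ with ‖w‖ ≤ 1. Then H is the trivial subgroup: every h ∈ H is the identity map. -/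
/-!
Every isometry of a real normed space is affine (Mazur–Ulam), and taking the linear part is a
monoid homomorphism into the normed ring of continuous linear maps. The displacement bound makes
`‖A ^ n - 1‖ ≤ 1/10` for the linear part `A` of any `h ∈ H` and all `n`. In a normed ring,
`a ^ 2 - 1 = 2 (a - 1) + (a - 1) ^ 2`, so squaring multiplies `‖a - 1‖` by at least `2 - c > 1`
while `‖a - 1‖ ≤ c`; the powers `A ^ 2 ^ m` then force `A = 1`. So `h` is the translation by
`h 0`, and `h ^ n` moves `0` by `n ‖h 0‖ ≤ 1/20`, whence `h 0 = 0`.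
-/

theorem eq_zero_of_forall_pow_mul_le {r a C : ℝ} (hr : 1 < r) (ha : 0 ≤ a)
    (h : ∀ m : ℕ, r ^ m * a ≤ C) : a = 0 := by
  by_contra ha0
  obtain ⟨m, hm⟩ := pow_unbounded_of_one_lt (C / a) hr
  rw [div_lt_iff₀ (ha.lt_of_ne' ha0)] at hm
  linarith [h m]

section NormedRing

variable {R : Type*} [NormedRing R] [NormedSpace ℝ R]

theorem mul_norm_sub_one_le_norm_sq_sub_one {a : R} {c : ℝ} (ha : ‖a - 1‖ ≤ c) :
    (2 - c) * ‖a - 1‖ ≤ ‖a ^ 2 - 1‖ := by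
  set u := a - 1 with hu
  have hsq : a ^ 2 - 1 = (2 : ℝ) • u + u * u := by
    rw [hu, two_smul]
    noncomm_ring
  have : 2 * ‖u‖ ≤ ‖a ^ 2 - 1‖ + ‖u‖ * ‖u‖ :=
    calc 2 * ‖u‖ = ‖(2 : ℝ) • u‖ := by rw [norm_smul, Real.norm_two]
      _ = ‖(a ^ 2 - 1) - u * u‖ := by rw [hsq, add_sub_cancel_right]
      _ ≤ ‖a ^ 2 - 1‖ + ‖u‖ * ‖u‖ := (norm_sub_le _ _).trans (by gcongr; exact norm_mul_le _ _)
  nlinarith [norm_nonneg u]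

theorem eq_one_of_forall_norm_pow_sub_one_le {a : R} {c : ℝ} (hc : c < 1)
    (ha : ∀ n : ℕ, ‖a ^ n - 1‖ ≤ c) : a = 1 := by
  have growth : ∀ m : ℕ, (2 - c) ^ m * ‖a - 1‖ ≤ ‖a ^ 2 ^ m - 1‖ := by
    intro m
    induction m with
    | zero => simp
    | succ m ih =>
      calc (2 - c) ^ (m + 1) * ‖a - 1‖ = (2 - c) * ((2 - c) ^ m * ‖a - 1‖) := by ring
        _ ≤ (2 - c) * ‖a ^ 2 ^ m - 1‖ := by gcongr; linarith
        _ ≤ ‖(a ^ 2 ^ m) ^ 2 - 1‖ := mul_norm_sub_one_le_norm_sq_sub_one (ha _)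
        _ = ‖a ^ 2 ^ (m + 1) - 1‖ := by rw [← pow_mul, pow_succ]
  have hzero := eq_zero_of_forall_pow_mul_le (by linarith : 1 < 2 - c) (norm_nonneg (a - 1))
    fun m => (growth m).trans (ha _)
  exact sub_eq_zero.mp (norm_eq_zero.mp hzero)

end NormedRing

namespace IsometryEquiv

variable {E : Type*} [NormedAddCommGroup E] [NormedSpace ℝ E]

noncomputable def linearPart : (E ≃ᵢ E) →* (E →L[ℝ] E) where
  toFun f := f.toRealLinearIsometryEquiv.toContinuousLinearEquiv
  map_one' := by
    ext x
    simp [toRealLinearIsometryEquiv_apply]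
  map_mul' f g := by
    ext x
    have := map_sub f.toRealLinearIsometryEquiv (g x) (g 0)
    simp only [toRealLinearIsometryEquiv_apply] at this
    simp [toRealLinearIsometryEquiv_apply, this]

theorem linearPart_apply (f : E ≃ᵢ E) (x : E) : linearPart f x = f x - f 0 :=
  f.toRealLinearIsometryEquiv_apply x

theorem norm_linearPart_sub_one_le {f : E ≃ᵢ E} {ε : ℝ}
    (hf : ∀ w : E, ‖w‖ ≤ 1 → dist w (f w) ≤ ε) : ‖linearPart f - 1‖ ≤ 2 * ε := by
  have h0 : ‖f 0‖ ≤ ε := by simpa using hf 0 (by simp)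
  refine ContinuousLinearMap.opNorm_le_of_unit_norm (by linarith [norm_nonneg (f 0)])
    fun w hw => ?_
  have hw : ‖f w - w‖ ≤ ε := by simpa [dist_eq_norm'] using hf w hw.le
  calc ‖(linearPart f - 1) w‖ = ‖(f w - w) - f 0‖ := by
        rw [sub_apply, linearPart_apply, one_apply_eq_self, sub_right_comm]
    _ ≤ 2 * ε := (norm_sub_le _ _).trans (by linarith)

theorem apply_eq_add_of_linearPart_eq_one {f : E ≃ᵢ E} (hf : linearPart f = 1) (x : E) :
    f x = x + f 0 := by
  rw [← sub_eq_iff_eq_add, ← linearPart_apply, hf, one_apply_eq_self]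

theorem pow_apply_zero_of_linearPart_eq_one {f : E ≃ᵢ E} (hf : linearPart f = 1) (n : ℕ) :
    (f ^ n) 0 = n • f 0 := by
  induction n with
  | zero => simp
  | succ n ih =>
    rw [pow_succ', mul_apply, ih, apply_eq_add_of_linearPart_eq_one hf, succ_nsmul]

end IsometryEquiv

/-- If `H` is a subgroup of the isometry group of Euclidean space `ℝᵏ` such that
every element displaces every point of the closed unit ball by at most `1/20`, then `H` is
trivial: every element of `H` is the identity map. -/
theorem euclidean_isometry_subgroup_small_displacement_trivial
    (k : ℕ) (H : Subgroup (EuclideanSpace ℝ (Fin k) ≃ᵢ EuclideanSpace ℝ (Fin k)))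
    (hsmall : ∀ h ∈ H, ∀ w : EuclideanSpace ℝ (Fin k), ‖w‖ ≤ 1 → dist w (h w) ≤ 1 / 20) :
    ∀ h ∈ H, ∀ x : EuclideanSpace ℝ (Fin k), h x = x := by
  intro h hh x
  have hlin : IsometryEquiv.linearPart h = 1 := by
    refine eq_one_of_forall_norm_pow_sub_one_le (c := 2 * (1 / 20)) (by norm_num) fun n => ?_
    rw [← map_pow]
    exact IsometryEquiv.norm_linearPart_sub_one_le (hsmall _ (pow_mem hh n))
  have hzero : h 0 = 0 := by
    refine norm_eq_zero.mp <|
      eq_zero_of_forall_pow_mul_le (C := 1 / 20) one_lt_two (norm_nonneg _) fun m => ?_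
    have := hsmall _ (pow_mem hh (2 ^ m)) 0 (by simp)
    rwa [dist_zero_left, IsometryEquiv.pow_apply_zero_of_linearPart_eq_one hlin,
      RCLike.norm_nsmul ℝ, nsmul_eq_mul, Nat.cast_pow, Nat.cast_ofNat] at this
  rw [IsometryEquiv.apply_eq_add_of_linearPart_eq_one hlin, hzero, add_zero]
end
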